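/- arXiv:1208.3058 — 2 statements merged into one kernel-verified Lean document; each statement's English description precedes it below -/
import Mathlib

section
/- Let x ∈ ℓ¹ satisfy |x(n)| > ∑_{i>n} |x(i)| for all sufficiently large n, and suppose x is not eventually zero. Then E(x) is homeomorphic to the Cantor set. -/
open Set Filter Topology

/-- The achievement set (set of all subsums) of a series `∑ x n`. -/
noncomputable def achSet (x : ℕ → ℝ) : Set ℝ :=
  {a : ℝ | ∃ A : Set ℕ, HasSum (fun n : A => x n) a}

/-- The tail sum `∑_{i > n} |x i|`. -/
noncomputable def tailSum (x : ℕ → ℝ) (n : ℕ) : ℝ := ∑' i : ℕ, |x (n + 1 + i)|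

/-- `S` is a finite union of closed intervals. -/
def IsFinUnionClosedIntervals (S : Set ℝ) : Prop :=
  ∃ s : Finset (ℝ × ℝ), S = ⋃ p ∈ s, Set.Icc p.1 p.2

/-- `S` is homeomorphic to the Cantor set (the Cantor space `ℕ → Bool`). -/
def CantorLike (S : Set ℝ) : Prop := Nonempty (S ≃ₜ (ℕ → Bool))

/-!
A nonempty compact perfect subset `K` of `ℝ` with empty interior is homeomorphic to the Cantor
space (Brouwer): cut `K` at a point of the middle third of `[inf K, sup K]` that is missing from
`K`, and iterate. This gives a Cantor scheme with disjoint children and diameters shrinking by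
`2/3` at each step, whose induced map `(ℕ → Bool) → K` is a continuous bijection.

The set of subsums is the image of the Cantor space under the continuous map
`ε ↦ ∑ ε n * x n`, so it is compact. It is perfect because flipping one small nonzero
coordinate moves a subsum by a small nonzero amount. If `|x n| > ∑_{i > n} |x i|` for every
`n`, the first coordinate where two codes differ separates their subsums, so the map is
injective and its image is totally disconnected. In general this holds from some `N` on, and
the set of subsums is a union of `2 ^ N` translates of a closed set with empty interior.
-/

structure IsPerfectNowhereDense (K : Set ℝ) : Prop where
  isCompact : IsCompact K
  nonempty : K.Nonempty
  preperfect : Preperfect K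
  interior_eq_empty : interior K = ∅

noncomputable def gapPoint (K : Set ℝ) : ℝ :=
  Classical.epsilon fun z =>
    z ∈ Ioo ((2 * sInf K + sSup K) / 3) ((sInf K + 2 * sSup K) / 3) ∧ z ∉ K

noncomputable def gapHalf (K : Set ℝ) : Bool → Set ℝ
  | false => K ∩ Iic (gapPoint K)
  | true => K ∩ Ici (gapPoint K)

theorem gapHalf_subset (K : Set ℝ) (b : Bool) : gapHalf K b ⊆ K := by
  cases b <;> exact inter_subset_left

theorem subset_iUnion_gapHalf (K : Set ℝ) : K ⊆ ⋃ b, gapHalf K b := fun p hp =>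
  (le_total p (gapPoint K)).elim (fun h => mem_iUnion.2 ⟨false, hp, h⟩)
    (fun h => mem_iUnion.2 ⟨true, hp, h⟩)

namespace IsPerfectNowhereDense

variable {K : Set ℝ} (hK : IsPerfectNowhereDense K)
include hK

theorem sInf_lt_sSup : sInf K < sSup K := by
  obtain ⟨a, ha⟩ := hK.nonempty
  obtain ⟨b, ⟨-, hb⟩, hba⟩ := preperfect_iff_nhds.1 hK.preperfect a ha univ univ_mem
  have hinf := fun p (hp : p ∈ K) => csInf_le hK.isCompact.bddBelow hp
  have hsup := fun p (hp : p ∈ K) => le_csSup hK.isCompact.bddAbove hp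
  rcases hba.lt_or_gt with h | h
  · exact (hinf b hb).trans_lt (h.trans_le (hsup a ha))
  · exact (hinf a ha).trans_lt (h.trans_le (hsup b hb))

theorem gapPoint_mem_Ioo_and_notMem :
    gapPoint K ∈ Ioo ((2 * sInf K + sSup K) / 3) ((sInf K + 2 * sSup K) / 3) ∧
      gapPoint K ∉ K := by
  refine Classical.epsilon_spec (not_subset.1 fun hsub => ?_)
  have := interior_maximal hsub isOpen_Ioo
  rw [hK.interior_eq_empty, subset_empty_iff, Ioo_eq_empty_iff] at this
  exact this (by linarith [hK.sInf_lt_sSup])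

theorem gapHalf_false_eq : gapHalf K false = Iio (gapPoint K) ∩ K := by
  ext p
  rw [inter_comm]
  exact and_congr_right fun hp =>
    (ne_of_mem_of_not_mem hp hK.gapPoint_mem_Ioo_and_notMem.2).le_iff_lt

theorem gapHalf_true_eq : gapHalf K true = Ioi (gapPoint K) ∩ K := by
  ext p
  rw [inter_comm]
  exact and_congr_right fun hp =>
    (ne_of_mem_of_not_mem hp hK.gapPoint_mem_Ioo_and_notMem.2).symm.le_iff_lt

theorem disjoint_gapHalf : Disjoint (gapHalf K false) (gapHalf K true) := by
  rw [hK.gapHalf_false_eq]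
  exact (Iio_disjoint_Ici le_rfl).mono inter_subset_left inter_subset_right

theorem diam_gapHalf_le (b : Bool) : Metric.diam (gapHalf K b) ≤ 2 / 3 * Metric.diam K := by
  have hg := hK.gapPoint_mem_Ioo_and_notMem.1
  have hlt := hK.sInf_lt_sSup
  have hinf := fun p (hp : p ∈ gapHalf K b) =>
    csInf_le hK.isCompact.bddBelow (gapHalf_subset K b hp)
  have hsup := fun p (hp : p ∈ gapHalf K b) =>
    le_csSup hK.isCompact.bddAbove (gapHalf_subset K b hp)
  rw [Real.diam_eq hK.isCompact.isBounded]
  refine Metric.diam_le_of_forall_dist_le (by linarith) fun p hp q hq => ?_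
  rw [Real.dist_eq, abs_sub_le_iff]
  cases b
  · have hp' : p ≤ gapPoint K := hp.2
    have hq' : q ≤ gapPoint K := hq.2
    constructor <;> linarith [hinf p hp, hinf q hq, hg.2]
  · have hp' : gapPoint K ≤ p := hp.2
    have hq' : gapPoint K ≤ q := hq.2
    constructor <;> linarith [hsup p hp, hsup q hq, hg.1]

theorem gapHalf (b : Bool) : IsPerfectNowhereDense (gapHalf K b) := by
  have hg := hK.gapPoint_mem_Ioo_and_notMem.1
  have hlt := hK.sInf_lt_sSup
  refine ⟨?_, ?_, ?_, ?_⟩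
  · cases b
    exacts [hK.isCompact.inter_right isClosed_Iic, hK.isCompact.inter_right isClosed_Ici]
  · cases b
    · exact ⟨sInf K, hK.isCompact.sInf_mem hK.nonempty, show sInf K ≤ _ by linarith [hg.1]⟩
    · exact ⟨sSup K, hK.isCompact.sSup_mem hK.nonempty, show _ ≤ sSup K by linarith [hg.2]⟩
  · cases b
    · rw [hK.gapHalf_false_eq]; exact hK.preperfect.open_inter isOpen_Iio
    · rw [hK.gapHalf_true_eq]; exact hK.preperfect.open_inter isOpen_Ioi
  · exact subset_empty_iff.1 (hK.interior_eq_empty ▸ interior_mono (gapHalf_subset K b))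

end IsPerfectNowhereDense

theorem CantorScheme.exists_forall_mem_res {β α : Type*} [Nonempty β] {A : List β → Set α}
    (hcover : ∀ l, A l ⊆ ⋃ b, A (b :: l)) {y : α} (hy : y ∈ A []) :
    ∃ x : ℕ → β, ∀ n, y ∈ A (PiNat.res x n) := by
  choose c hc using fun l => (em (y ∈ A l)).elim
    (fun h => (mem_iUnion.1 (hcover l h)).imp fun _ hb _ => hb)
    (fun h => ⟨Classical.arbitrary β, fun h' => absurd h' h⟩)
  let L : ℕ → List β := fun n => Nat.rec [] (fun _ l => c l :: l) n
  have hres : ∀ n, PiNat.res (fun n => c (L n)) n = L n := by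
    intro n
    induction n with
    | zero => rfl
    | succ n ih => rw [PiNat.res_succ, ih]
  refine ⟨fun n => c (L n), fun n => ?_⟩
  rw [hres]
  induction n with
  | zero => exact hy
  | succ n ih => exact hc (L n) ih

noncomputable def gapScheme (K : Set ℝ) : List Bool → Set ℝ
  | [] => K
  | b :: l => gapHalf (gapScheme K l) b

theorem isPerfectNowhereDense_gapScheme {K : Set ℝ} (hK : IsPerfectNowhereDense K)
    (l : List Bool) : IsPerfectNowhereDense (gapScheme K l) := by
  induction l with
  | nil => exact hK
  | cons b l ih => exact ih.gapHalf b

namespace IsPerfectNowhereDense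

variable {K : Set ℝ} (hK : IsPerfectNowhereDense K)
include hK

theorem diam_gapScheme_le (l : List Bool) :
    Metric.diam (gapScheme K l) ≤ (2 / 3) ^ l.length * Metric.diam K := by
  induction l with
  | nil => simp [gapScheme]
  | cons b l ih =>
    calc Metric.diam (gapScheme K (b :: l))
        ≤ 2 / 3 * Metric.diam (gapScheme K l) :=
          (isPerfectNowhereDense_gapScheme hK l).diam_gapHalf_le b
      _ ≤ (2 / 3) ^ (b :: l).length * Metric.diam K := by
        rw [List.length_cons, pow_succ', mul_assoc]
        gcongr

theorem vanishingDiam_gapScheme : CantorScheme.VanishingDiam (gapScheme K) := by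
  intro x
  have hlim : Tendsto (fun n : ℕ => ENNReal.ofReal ((2 / 3 : ℝ) ^ n * Metric.diam K)) atTop
      (𝓝 0) := by
    rw [← ENNReal.ofReal_zero]
    refine ENNReal.tendsto_ofReal ?_
    simpa using (tendsto_pow_atTop_nhds_zero_of_lt_one (by norm_num) (by norm_num)).mul_const
      (Metric.diam K)
  refine tendsto_of_tendsto_of_tendsto_of_le_of_le tendsto_const_nhds hlim (fun _ => zero_le)
    fun n => Metric.ediam_le_of_forall_dist_le fun p hp q hq => ?_
  rw [← PiNat.res_length x n]
  exact (Metric.dist_le_diam_of_mem (isPerfectNowhereDense_gapScheme hK _).isCompact.isBounded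
    hp hq).trans (hK.diam_gapScheme_le _)

theorem cantorLike : CantorLike K := by
  have hA := isPerfectNowhereDense_gapScheme hK
  have hanti : CantorScheme.ClosureAntitone (gapScheme K) :=
    CantorScheme.Antitone.closureAntitone (fun l b => gapHalf_subset _ b)
      fun l => (hA l).isCompact.isClosed
  have hdom := hanti.map_of_vanishingDiam hK.vanishingDiam_gapScheme fun l => (hA l).nonempty
  have hdisj : CantorScheme.Disjoint (gapScheme K) := by
    intro l a b hab
    cases a <;> cases b
    exacts [absurd rfl hab, (hA l).disjoint_gapHalf, (hA l).disjoint_gapHalf.symm,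
      absurd rfl hab]
  let f : (ℕ → Bool) → K := fun x =>
    ⟨(CantorScheme.inducedMap (gapScheme K)).2 ⟨x, hdom ▸ mem_univ x⟩,
      CantorScheme.map_mem _ 0⟩
  have hf : Continuous f :=
    (hK.vanishingDiam_gapScheme.map_continuous.comp (continuous_id.subtype_mk _)).subtype_mk _
  have hinj : Function.Injective f := fun x y hxy =>
    Subtype.mk.inj (hdisj.map_injective (Subtype.mk.inj hxy))
  have hsurj : Function.Surjective f := by
    rintro ⟨y, hy⟩
    obtain ⟨x, hx⟩ := CantorScheme.exists_forall_mem_res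
      (fun l => subset_iUnion_gapHalf (gapScheme K l)) (show y ∈ gapScheme K [] from hy)
    refine ⟨x, Subtype.ext (eq_of_forall_dist_le fun ε hε => ?_)⟩
    obtain ⟨n, hn⟩ := hK.vanishingDiam_gapScheme.dist_lt ε hε x
    exact (hn _ (CantorScheme.map_mem _ n) y (hx n)).le
  exact ⟨(hf.homeoOfEquivCompactToT2 (f := Equiv.ofBijective f ⟨hinj, hsurj⟩)).symm⟩

end IsPerfectNowhereDense

theorem IsTotallyDisconnected.interior_eq_empty {s : Set ℝ} (hs : IsTotallyDisconnected s) :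
    interior s = ∅ := by
  refine eq_empty_iff_forall_notMem.2 fun z hz => ?_
  obtain ⟨r, hr, hball⟩ := Metric.isOpen_iff.1 isOpen_interior z hz
  have hmem : z + r / 2 ∈ Metric.ball z r := by
    rw [Metric.mem_ball, Real.dist_eq, add_sub_cancel_left, abs_of_pos (half_pos hr)]
    exact half_lt_self hr
  have := hs _ (hball.trans interior_subset) (convex_ball z r).isPreconnected hmem
    (Metric.mem_ball_self hr)
  linarith

theorem tailSum_shift (x : ℕ → ℝ) (n : ℕ) :
    tailSum (fun i => x (i + 1)) n = tailSum x (n + 1) :=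
  tsum_congr fun i => congrArg (fun k => |x k|) (by omega)

noncomputable def subsum (x : ℕ → ℝ) (ε : ℕ → Bool) : ℝ :=
  ∑' n, if ε n then x n else 0

section subsum

variable {x : ℕ → ℝ}

theorem summable_subsum (hx : Summable x) (ε : ℕ → Bool) :
    Summable fun n => if ε n then x n else 0 :=
  hx.abs.of_norm_bounded fun n => by cases ε n <;> simp

theorem continuous_subsum (hx : Summable x) : Continuous (subsum x) :=
  continuous_tsum (fun n => (continuous_of_discreteTopology
      (f := fun b : Bool => if b then x n else 0)).comp (continuous_apply n)) hx.abs
    fun n ε => by cases ε n <;> simp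

theorem achSet_eq_range_subsum (hx : Summable x) : achSet x = range (subsum x) := by
  classical
  have hind : ∀ A : Set ℕ, A.indicator x = fun n => if decide (n ∈ A) then x n else 0 :=
    fun A => funext fun n => by simp [indicator_apply]
  ext a
  constructor
  · rintro ⟨A, hA⟩
    refine ⟨fun n => decide (n ∈ A), ?_⟩
    rw [subsum, ← hind]
    exact (hasSum_subtype_iff_indicator.1 hA).tsum_eq
  · rintro ⟨ε, rfl⟩
    refine ⟨{n | ε n}, hasSum_subtype_iff_indicator.2 ?_⟩
    convert (summable_subsum hx ε).hasSum using 1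
    · funext n
      simp [hind]
    · rfl

theorem abs_subsum_update_sub (hx : Summable x) (ε : ℕ → Bool) (n : ℕ) :
    |subsum x (Function.update ε n (!ε n)) - subsum x ε| = |x n| := by
  have hupd : (fun i => if Function.update ε n (!ε n) i then x i else 0) =
      Function.update (fun i => if ε i then x i else 0) n (if !ε n then x n else 0) := by
    funext i
    by_cases hi : i = n
    · subst hi; simp
    · simp [hi]
  rw [subsum, hupd, ((summable_subsum hx ε).hasSum.update n _).tsum_eq, subsum]
  cases ε n <;> simp

theorem preperfect_range_subsum (hx : Summable x) (hfreq : ∃ᶠ n in atTop, x n ≠ 0) :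
    Preperfect (range (subsum x)) := by
  rw [preperfect_iff_nhds]
  rintro _ ⟨ε, rfl⟩ U hU
  obtain ⟨δ, hδ, hball⟩ := Metric.mem_nhds_iff.1 hU
  obtain ⟨n, hn0, hnδ⟩ :=
    (hfreq.and_eventually (hx.abs.tendsto_atTop_zero.eventually (gt_mem_nhds hδ))).exists
  refine ⟨subsum x (Function.update ε n (!ε n)), ⟨hball ?_, mem_range_self _⟩,
    fun h => hn0 ?_⟩
  · rwa [Metric.mem_ball, Real.dist_eq, abs_subsum_update_sub hx]
  · rw [← abs_eq_zero, ← abs_subsum_update_sub hx ε n, h, sub_self, abs_zero]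

theorem subsum_eq_add_subsum_shift (hx : Summable x) (ε : ℕ → Bool) :
    subsum x ε = (if ε 0 then x 0 else 0) + subsum (fun n => x (n + 1)) (fun n => ε (n + 1)) :=
  (summable_subsum hx ε).tsum_eq_zero_add

theorem abs_subsum_sub_le (hx : Summable x) (ε ε' : ℕ → Bool) :
    |subsum x ε - subsum x ε'| ≤ ∑' n, |x n| := by
  rw [subsum, subsum, ← (summable_subsum hx ε).tsum_sub (summable_subsum hx ε'),
    ← Real.norm_eq_abs]
  exact tsum_of_norm_bounded hx.abs.hasSum fun n => by cases ε n <;> cases ε' n <;> simp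

theorem apply_zero_eq_of_subsum_eq (hx : Summable x) (h0 : tailSum x 0 < |x 0|)
    {ε ε' : ℕ → Bool} (h : subsum x ε = subsum x ε') : ε 0 = ε' 0 := by
  by_contra hne
  set s := subsum (fun n => x (n + 1)) (fun n => ε (n + 1))
  set s' := subsum (fun n => x (n + 1)) (fun n => ε' (n + 1))
  have hhead : |(if ε 0 then x 0 else 0) - (if ε' 0 then x 0 else 0)| = |x 0| := by
    cases h1 : ε 0 <;> cases h2 : ε' 0 <;> simp_all
  rw [subsum_eq_add_subsum_shift hx, subsum_eq_add_subsum_shift hx] at h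
  rw [show (if ε 0 then x 0 else 0) - (if ε' 0 then x 0 else 0) = s' - s by linarith]
    at hhead
  have htail : tailSum x 0 = ∑' n, |x (n + 1)| := by simp only [tailSum, zero_add, add_comm]
  linarith [abs_subsum_sub_le ((summable_nat_add_iff 1).2 hx) (fun n => ε' (n + 1))
    (fun n => ε (n + 1))]

theorem subsum_injective (hx : Summable x) (hfast : ∀ n, tailSum x n < |x n|) :
    Function.Injective (subsum x) := by
  intro ε ε' h
  funext n
  induction n generalizing x ε ε' with
  | zero => exact apply_zero_eq_of_subsum_eq hx (hfast 0) h
  | succ n ih =>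
    have h0 := apply_zero_eq_of_subsum_eq hx (hfast 0) h
    rw [subsum_eq_add_subsum_shift hx, subsum_eq_add_subsum_shift hx, h0, add_right_inj] at h
    exact ih ((summable_nat_add_iff 1).2 hx) (fun n => tailSum_shift x n ▸ hfast (n + 1)) h

theorem interior_range_subsum_eq_empty (hx : Summable x) {N : ℕ}
    (hN : ∀ n ≥ N, tailSum x n < |x n|) : interior (range (subsum x)) = ∅ := by
  induction N generalizing x with
  | zero =>
    have hinj := subsum_injective hx fun n => hN n n.zero_le
    exact IsTotallyDisconnected.interior_eq_empty <|
      ((continuous_subsum hx).isClosedEmbedding hinj).isEmbedding.isTotallyDisconnected_range.2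
        inferInstance
  | succ N ih =>
    set x' : ℕ → ℝ := fun n => x (n + 1)
    have hx' : Summable x' := (summable_nat_add_iff 1).2 hx
    have hint := ih hx' fun n hn => tailSum_shift x n ▸ hN (n + 1) (by omega)
    have hsub : range (subsum x) ⊆
        range (subsum x') ∪ Homeomorph.addLeft (x 0) '' range (subsum x') := by
      rintro _ ⟨ε, rfl⟩
      rw [subsum_eq_add_subsum_shift hx]
      cases ε 0
      · exact Or.inl ⟨_, (zero_add _).symm⟩
      · exact Or.inr ⟨_, mem_range_self _, rfl⟩
    have hint' : interior (Homeomorph.addLeft (x 0) '' range (subsum x')) = ∅ := by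
      rw [← Homeomorph.image_interior, hint, image_empty]
    have hcl : IsClosed (range (subsum x')) := (isCompact_range (continuous_subsum hx')).isClosed
    refine subset_empty_iff.1 ((interior_mono hsub).trans ?_)
    rw [interior_union_isClosed_of_interior_empty hcl hint', hint]

end subsum

theorem achSet_cantorLike_of_fast_decay_general (x : ℕ → ℝ) (hx : Summable fun n => |x n|)
    (hbig : ∀ᶠ n in atTop, tailSum x n < |x n|) :
    CantorLike (achSet x) := by
  have hsum : Summable x := hx.of_abs
  obtain ⟨N, hN⟩ := eventually_atTop.1 hbig
  have hne : ∃ᶠ n in atTop, x n ≠ 0 :=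
    (hbig.mono fun n hn => abs_pos.1 ((tsum_nonneg fun _ => abs_nonneg _).trans_lt hn)).frequently
  rw [achSet_eq_range_subsum hsum]
  exact IsPerfectNowhereDense.cantorLike
    { isCompact := isCompact_range (continuous_subsum hsum)
      nonempty := range_nonempty _
      preperfect := preperfect_range_subsum hsum hne
      interior_eq_empty := interior_range_subsum_eq_empty hsum hN }

theorem achSet_cantorLike_of_fast_decay (x : ℕ → ℝ) (hx : Summable fun n => |x n|)
    (hbig : ∀ᶠ n in atTop, tailSum x n < |x n|)
    (hnz : ∀ N : ℕ, ∃ n ≥ N, x n ≠ 0) :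
    CantorLike (achSet x) :=
  achSet_cantorLike_of_fast_decay_general x hx hbig
end

section
/- Let x ∈ ℓ¹ satisfy |x(n)| ≤ ∑_{i>n} |x(i)| for all sufficiently large n. Then E(x) is a finite union of closed intervals. -/
open Set Filter Topology

/-!
Kakeya's argument: if `0 ≤ y n ≤ ∑_{i>n} y i` for all `n`, every `t ∈ [0, ∑ y]` is reached by
the greedy choice "take `y n` whenever it does not exceed what is still missing", because the
missing amount stays between `0` and the remaining tail sum, which tends to `0`. So the
achievement set is an interval. A general absolutely summable `x` reduces to `|x|`: flipping the
membership of every index with `x n < 0` shows `E(x) = ∑ min (x n) 0 + E(|x|)`. Finally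
`E(x) = E(x ∘ succ) ∪ (x 0 + E(x ∘ succ))`, so the finitely many terms before the condition
holds only produce finitely many translates of that interval.
-/

variable {x y : ℕ → ℝ}

theorem mem_achSet_iff {a : ℝ} : a ∈ achSet x ↔ ∃ A : Set ℕ, HasSum (A.indicator x) a :=
  exists_congr fun _ => hasSum_subtype_iff_indicator

theorem hasSum_indicator_preimage_succ_iff {A : Set ℕ} {a : ℝ} :
    HasSum (((· + 1) ⁻¹' A).indicator fun n => x (n + 1)) (a - A.indicator x 0) ↔
      HasSum (A.indicator x) a := by
  rw [← hasSum_nat_add_iff' 1 (f := A.indicator x), Finset.sum_range_one]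
  exact Iff.rfl

theorem achSet_eq_union_image_add (x : ℕ → ℝ) :
    achSet x = achSet (fun n => x (n + 1)) ∪ (x 0 + ·) '' achSet (fun n => x (n + 1)) := by
  ext a
  simp only [mem_union, mem_image, mem_achSet_iff]
  constructor
  · rintro ⟨A, hA⟩
    have hB := hasSum_indicator_preimage_succ_iff.2 hA
    by_cases h0 : 0 ∈ A
    · exact Or.inr ⟨_, ⟨_, hB⟩, by simp [h0]⟩
    · exact Or.inl ⟨_, by simpa [h0] using hB⟩
  · rintro (⟨B, hB⟩ | ⟨b, ⟨B, hB⟩, rfl⟩)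
    · have hpre : (· + 1) ⁻¹' ((· + 1) '' B) = B := by ext; simp
      refine ⟨(· + 1) '' B, hasSum_indicator_preimage_succ_iff.1 ?_⟩
      simpa [hpre] using hB
    · have hpre : (· + 1) ⁻¹' insert 0 ((· + 1) '' B) = B := by ext; simp
      refine ⟨insert 0 ((· + 1) '' B), hasSum_indicator_preimage_succ_iff.1 ?_⟩
      simpa [hpre] using hB

theorem isFinUnionClosedIntervals_Icc (a b : ℝ) : IsFinUnionClosedIntervals (Icc a b) :=
  ⟨{(a, b)}, by simp⟩

theorem IsFinUnionClosedIntervals.union {S T : Set ℝ} (hS : IsFinUnionClosedIntervals S)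
    (hT : IsFinUnionClosedIntervals T) : IsFinUnionClosedIntervals (S ∪ T) := by
  classical
  obtain ⟨s, rfl⟩ := hS
  obtain ⟨t, rfl⟩ := hT
  exact ⟨s ∪ t, by rw [Finset.set_biUnion_union]⟩

theorem IsFinUnionClosedIntervals.image_const_add {S : Set ℝ} (hS : IsFinUnionClosedIntervals S)
    (c : ℝ) : IsFinUnionClosedIntervals ((c + ·) '' S) := by
  classical
  obtain ⟨s, rfl⟩ := hS
  refine ⟨s.image fun p => (c + p.1, c + p.2), ?_⟩
  simp only [image_iUnion₂, image_const_add_Icc, Finset.set_biUnion_finset_image]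

theorem isFinUnionClosedIntervals_achSet_of_comp_add (n : ℕ)
    (h : IsFinUnionClosedIntervals (achSet fun i => x (i + n))) :
    IsFinUnionClosedIntervals (achSet x) := by
  induction n generalizing x with
  | zero => exact h
  | succ n ih =>
    have hsucc := ih (x := fun i => x (i + 1)) h
    rw [achSet_eq_union_image_add]
    exact hsucc.union (hsucc.image_const_add _)

theorem indicator_eq_min_add_indicator_symmDiff (A : Set ℕ) (n : ℕ) :
    A.indicator x n = min (x n) 0 + (symmDiff A {i | x i < 0}).indicator (fun i => |x i|) n := by
  by_cases hA : n ∈ A <;> by_cases hx : x n < 0 <;>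
    simp [mem_symmDiff, hA, hx, abs_of_neg, abs_of_nonneg, le_of_lt, not_lt.1]

theorem Summable.min_zero_of_abs (hx : Summable fun n => |x n|) :
    Summable fun n => min (x n) 0 :=
  Summable.of_norm_bounded hx fun _ => abs_le.2
    ⟨le_min (neg_abs_le _) (neg_nonpos.2 (abs_nonneg _)), (min_le_right _ _).trans (abs_nonneg _)⟩

theorem achSet_eq_image_add_achSet_abs (hx : Summable fun n => |x n|) :
    achSet x = (∑' n, min (x n) 0 + ·) '' achSet fun n => |x n| := by
  have hmin := hx.min_zero_of_abs.hasSum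
  ext a
  simp only [mem_image, mem_achSet_iff]
  constructor
  · rintro ⟨A, hA⟩
    refine ⟨a - ∑' n, min (x n) 0, ⟨symmDiff A {i | x i < 0}, ?_⟩, add_sub_cancel _ _⟩
    have hsub : (symmDiff A {i | x i < 0}).indicator (fun i => |x i|) =
        A.indicator x - fun n => min (x n) 0 := by
      ext n
      rw [Pi.sub_apply, indicator_eq_min_add_indicator_symmDiff A n, add_sub_cancel_left]
    exact hsub ▸ hA.sub hmin
  · rintro ⟨b, ⟨B, hB⟩, rfl⟩
    refine ⟨symmDiff B {i | x i < 0}, ?_⟩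
    convert hmin.add hB using 1
    ext n
    rw [indicator_eq_min_add_indicator_symmDiff, symmDiff_symmDiff_cancel_right]

open Classical in
noncomputable def greedyRemainder (y : ℕ → ℝ) (t : ℝ) : ℕ → ℝ
  | 0 => t
  | n + 1 =>
    if y n ≤ greedyRemainder y t n then greedyRemainder y t n - y n else greedyRemainder y t n

def greedySet (y : ℕ → ℝ) (t : ℝ) : Set ℕ := {n | y n ≤ greedyRemainder y t n}

theorem greedyRemainder_succ (y : ℕ → ℝ) (t : ℝ) (n : ℕ) :
    greedyRemainder y t (n + 1) = greedyRemainder y t n - (greedySet y t).indicator y n := by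
  classical
  by_cases h : y n ≤ greedyRemainder y t n <;>
    simp [greedyRemainder, greedySet, h]

theorem greedyRemainder_eq_sub_sum (y : ℕ → ℝ) (t : ℝ) (n : ℕ) :
    greedyRemainder y t n = t - ∑ i ∈ Finset.range n, (greedySet y t).indicator y i := by
  induction n with
  | zero => simp [greedyRemainder]
  | succ n ih => rw [greedyRemainder_succ, ih, Finset.sum_range_succ, sub_add_eq_sub_sub]

theorem greedyRemainder_mem_Icc (hy : Summable y) (hle : ∀ n, y n ≤ ∑' i, y (n + 1 + i))
    {t : ℝ} (ht : t ∈ Icc 0 (∑' n, y n)) (n : ℕ) :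
    greedyRemainder y t n ∈ Icc 0 (∑' i, y (i + n)) := by
  induction n with
  | zero => simpa [greedyRemainder] using ht
  | succ n ih =>
    have htail : ∑' i, y (i + n) = y n + ∑' i, y (i + (n + 1)) := by
      rw [((summable_nat_add_iff n).2 hy).tsum_eq_zero_add, zero_add]
      exact congrArg _ (tsum_congr fun i => congrArg y (by omega))
    have hyn : y n ≤ ∑' i, y (i + (n + 1)) := by simpa only [add_comm] using hle n
    rw [greedyRemainder]
    split_ifs with h
    · constructor <;> linarith [ih.2]
    · exact ⟨ih.1, by linarith⟩

theorem hasSum_indicator_greedySet (hy : Summable y) (hle : ∀ n, y n ≤ ∑' i, y (n + 1 + i))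
    {t : ℝ} (ht : t ∈ Icc 0 (∑' n, y n)) : HasSum ((greedySet y t).indicator y) t := by
  have hrem : Tendsto (greedyRemainder y t) atTop (𝓝 0) :=
    tendsto_of_tendsto_of_tendsto_of_le_of_le tendsto_const_nhds (tendsto_sum_nat_add y)
      (fun n => (greedyRemainder_mem_Icc hy hle ht n).1)
      (fun n => (greedyRemainder_mem_Icc hy hle ht n).2)
  rw [(hy.indicator _).hasSum_iff_tendsto_nat]
  simpa [greedyRemainder_eq_sub_sum] using (tendsto_const_nhds (x := t)).sub hrem

theorem achSet_eq_Icc_of_le_tsum (hy0 : ∀ n, 0 ≤ y n) (hy : Summable y)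
    (hle : ∀ n, y n ≤ ∑' i, y (n + 1 + i)) : achSet y = Icc 0 (∑' n, y n) := by
  ext a
  rw [mem_achSet_iff]
  constructor
  · rintro ⟨A, hA⟩
    exact ⟨hA.nonneg (indicator_nonneg fun n _ => hy0 n),
      hasSum_le (indicator_le_self' fun n _ => hy0 n) hA hy.hasSum⟩
  · exact fun ha => ⟨_, hasSum_indicator_greedySet hy hle ha⟩

theorem achSet_eq_Icc_of_abs_le_tailSum (hx : Summable fun n => |x n|)
    (h : ∀ n, |x n| ≤ tailSum x n) :
    achSet x = Icc (∑' n, min (x n) 0) (∑' n, max (x n) 0) := by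
  have hmax : ∀ n, min (x n) 0 + |x n| = max (x n) 0 := fun n => by
    rcases le_total (x n) 0 with hn | hn <;> simp [hn, abs_of_nonpos, abs_of_nonneg]
  rw [achSet_eq_image_add_achSet_abs hx, achSet_eq_Icc_of_le_tsum (fun n => abs_nonneg _) hx h,
    image_const_add_Icc, add_zero, ← hx.min_zero_of_abs.tsum_add hx]
  simp only [hmax]

theorem tailSum_comp_add (x : ℕ → ℝ) (N n : ℕ) :
    tailSum (fun i => x (i + N)) n = tailSum x (n + N) :=
  tsum_congr fun i => congrArg (fun k => |x k|) (by omega)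

theorem achSet_finUnion_of_slow_decay (x : ℕ → ℝ) (hx : Summable fun n => |x n|)
    (hsmall : ∀ᶠ n in atTop, |x n| ≤ tailSum x n) :
    IsFinUnionClosedIntervals (achSet x) := by
  obtain ⟨N, hN⟩ := eventually_atTop.1 hsmall
  refine isFinUnionClosedIntervals_achSet_of_comp_add N ?_
  rw [achSet_eq_Icc_of_abs_le_tailSum ((summable_nat_add_iff N).2 hx) fun n => ?_]
  · exact isFinUnionClosedIntervals_Icc _ _
  · rw [tailSum_comp_add]
    exact hN _ (Nat.le_add_left N n)
end
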